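/- arXiv:2007.11517 — 3 statements merged into one kernel-verified Lean document; each statement's English description precedes it below -/
import Mathlib

section
/- Let (p_1,...,p_N) be a probability vector with all p_i > 0 and let r_1,...,r_N ∈ (0,1). Let s ≥ 0 be the unique real number with ∑_{i=1}^N r_i^s = 1, and define t := max_{1 ≤ i ≤ N} (log p_i)/(log r_i). Then t ≥ s, with equality if and only if p_i = r_i^s for all i. -/
open Finset Real

theorem strictAnti_sum_rpow {ι : Type*} {s : Finset ι} (hs : s.Nonempty) {r : ι → ℝ}
    (hr : ∀ i ∈ s, r i ∈ Set.Ioo (0 : ℝ) 1) : StrictAnti fun x : ℝ => ∑ i ∈ s, r i ^ x :=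
  fun _ _ hxy => sum_lt_sum_of_nonempty hs fun i hi =>
    rpow_lt_rpow_of_exponent_gt (hr i hi).1 (hr i hi).2 hxy

theorem stmt0_general {N : ℕ} (p r : Fin N → ℝ)
    (hp : ∀ i, 0 < p i) (hpsum : ∑ i, p i = 1)
    (hr : ∀ i, r i ∈ Set.Ioo (0 : ℝ) 1)
    (s : ℝ) (hssum : ∑ i, r i ^ s = 1)
    (t : ℝ)
    (ht_ub : ∀ i, Real.log (p i) / Real.log (r i) ≤ t)
    (ht_mem : ∃ i, Real.log (p i) / Real.log (r i) = t) :
    s ≤ t ∧ (t = s ↔ ∀ i, p i = r i ^ s) := by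
  obtain ⟨i₀, hi₀⟩ := ht_mem
  -- `log p / log r` is `logb r p`, and `logb r p ≤ t ↔ r ^ t ≤ p` for a base `r < 1`.
  have hle : ∀ i, r i ^ t ≤ p i := fun i =>
    (logb_le_iff_le_rpow_of_base_lt_one (hr i).1 (hr i).2 (hp i)).1 (ht_ub i)
  have hsum : ∑ i, r i ^ t ≤ ∑ i, r i ^ s :=
    hssum ▸ hpsum ▸ sum_le_sum fun i _ => hle i
  refine ⟨(strictAnti_sum_rpow ⟨i₀, mem_univ _⟩ fun i _ => hr i).le_iff_ge.1 hsum, ?_, ?_⟩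
  · rintro rfl i
    have heq := (sum_eq_sum_iff_of_le fun i _ => hle i).1 (hpsum.trans hssum.symm).symm
    exact (heq i (mem_univ i)).symm
  · intro hpr
    rw [← hi₀, hpr i₀, log_div_log, logb_rpow (hr i₀).1 (hr i₀).2.ne]

/-- Let (p_1,...,p_N) be a probability vector with all p_i > 0 and
r_1,...,r_N ∈ (0,1). Let s ≥ 0 be the unique real with ∑ r_i^s = 1 and
t := max_i (log p_i)/(log r_i). Then t ≥ s, with equality iff p_i = r_i^s for all i. -/
theorem stmt0 {N : ℕ} (hN : 0 < N) (p r : Fin N → ℝ)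
    (hp : ∀ i, 0 < p i) (hpsum : ∑ i, p i = 1)
    (hr : ∀ i, r i ∈ Set.Ioo (0 : ℝ) 1)
    (s : ℝ) (hs : 0 ≤ s) (hssum : ∑ i, r i ^ s = 1)
    (t : ℝ)
    (ht_ub : ∀ i, Real.log (p i) / Real.log (r i) ≤ t)
    (ht_mem : ∃ i, Real.log (p i) / Real.log (r i) = t) :
    s ≤ t ∧ (t = s ↔ ∀ i, p i = r i ^ s) :=
  stmt0_general p r hp hpsum hr s hssum t ht_ub ht_mem
end

section
/- The matrix A_δ is primitive, hence irreducible: with L_δ = max{|i| : i ∈ P_δ}, every entry of the matrix power A_δ^{L_δ} is strictly positive. -/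
/-!
For `x ∈ P_δ` and a letter `a`, the word `a x` has ratio at most `δ`, so it has a prefix
`y ∈ P_δ`, and then `[a x] ⊆ [y]`, i.e. `A x y > 0`. Prepending to `i` the letters of a word
`w` one at a time, from the last to the first, therefore traces a positive path of length `|w|`. The
words of `P_δ` form a prefix antichain, so a word has at most one prefix in `P_δ`; taking for `w`
the word `j` followed by `L - |j|` arbitrary letters, the path ends at `j`.
-/

/-- The cylinder set of a finite word: infinite sequences beginning with that word. -/
def cyl {N : ℕ} (l : List (Fin N)) : Set (ℕ → Fin N) :=
  {ω | ∀ k : Fin l.length, ω k = l.get k}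

/-- Product of contraction ratios along a word. -/
def rword {N : ℕ} (r : Fin N → ℝ) (l : List (Fin N)) : ℝ := (l.map r).prod

/-- The stopping set P_δ = { i : r_i ≤ δ < r_{i^-} }. -/
def Pdelta {N : ℕ} (r : Fin N → ℝ) (δ : ℝ) : Set (List (Fin N)) :=
  {l | rword r l ≤ δ ∧ δ < rword r l.dropLast}


/-- Product of probabilities along a word. -/
def pword {N : ℕ} (p : Fin N → ℝ) (l : List (Fin N)) : ℝ := (l.map p).prod

open Classical in
/-- The transition matrix A_δ: entry a_{i,j} = p_a if [a i] ⊆ [j] (for the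
necessarily unique such letter a), and 0 otherwise. -/
noncomputable def Amat {N : ℕ} (p : Fin N → ℝ) (i j : List (Fin N)) : ℝ :=
  ∑ a : Fin N, if cyl (a :: i) ⊆ cyl j then p a else 0

namespace Matrix

variable {n α R : Type*} [Fintype n] [DecidableEq n] [Ring R] [LinearOrder R]
  [IsStrictOrderedRing R]

theorem pow_length_apply_foldr_pos {A : Matrix n n R} (hA : ∀ i j, 0 ≤ A i j)
    {f : α → n → n} (hf : ∀ a x, 0 < A x (f a x)) (l : List α) (x : n) :
    0 < (A ^ l.length) x (l.foldr f x) := by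
  induction l with
  | nil => simp
  | cons a l ih =>
    rw [List.length_cons, pow_succ, mul_apply, List.foldr_cons]
    exact Finset.sum_pos' (fun z _ => mul_nonneg (pow_apply_nonneg hA _ x z) (hA z _))
      ⟨_, Finset.mem_univ _, mul_pos ih (hf a _)⟩

end Matrix

variable {N : ℕ}

theorem cyl_subset_cyl_of_prefix {l₁ l₂ : List (Fin N)} (h : l₁ <+: l₂) :
    cyl l₂ ⊆ cyl l₁ := by
  obtain ⟨t, rfl⟩ := h
  intro ω hω k
  simpa [List.getElem_append_left k.2] using hω ⟨k, by simp; omega⟩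

section rword

variable {r : Fin N → ℝ}

theorem rword_append (l₁ l₂ : List (Fin N)) :
    rword r (l₁ ++ l₂) = rword r l₁ * rword r l₂ := by
  simp [rword]

theorem rword_nonneg (hr : ∀ a, 0 ≤ r a) (l : List (Fin N)) : 0 ≤ rword r l :=
  List.prod_nonneg (by simpa using fun a _ => hr a)

theorem rword_cons_le (hr : ∀ a, r a ∈ Set.Icc (0 : ℝ) 1) (a : Fin N) (l : List (Fin N)) :
    rword r (a :: l) ≤ rword r l := by
  simpa [rword] using mul_le_of_le_one_left (rword_nonneg (fun b => (hr b).1) l) (hr a).2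

theorem rword_le_one (hr : ∀ a, r a ∈ Set.Icc (0 : ℝ) 1) (l : List (Fin N)) :
    rword r l ≤ 1 := by
  induction l with
  | nil => simp [rword]
  | cons a l ih => exact (rword_cons_le hr a l).trans ih

theorem rword_le_of_prefix (hr : ∀ a, r a ∈ Set.Icc (0 : ℝ) 1) {u v : List (Fin N)}
    (h : u <+: v) : rword r v ≤ rword r u := by
  obtain ⟨t, rfl⟩ := h
  rw [rword_append]
  exact mul_le_of_le_one_right (rword_nonneg (fun a => (hr a).1) u) (rword_le_one hr t)

end rword

section Pdelta

variable {r : Fin N → ℝ} {δ : ℝ}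

theorem nil_notMem_Pdelta : [] ∉ Pdelta r δ := by
  simp [Pdelta, rword]

theorem lt_one_of_mem_Pdelta (hr : ∀ a, r a ∈ Set.Icc (0 : ℝ) 1) {l : List (Fin N)}
    (hl : l ∈ Pdelta r δ) : δ < 1 :=
  hl.2.trans_le (rword_le_one hr _)

theorem exists_mem_Pdelta_prefix (hδ : δ < 1) {w : List (Fin N)} (hw : rword r w ≤ δ) :
    ∃ u ∈ Pdelta r δ, u <+: w := by
  induction w using List.reverseRecOn with
  | nil => exact absurd hw (by simpa [rword] using hδ)
  | append_singleton w a ih =>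
    by_cases h : δ < rword r w
    · exact ⟨w ++ [a], ⟨hw, by simpa using h⟩, List.prefix_rfl⟩
    · obtain ⟨u, hu, huw⟩ := ih (not_lt.mp h)
      exact ⟨u, hu, huw.trans (List.prefix_append w [a])⟩

theorem eq_of_prefix_of_mem_Pdelta (hr : ∀ a, r a ∈ Set.Icc (0 : ℝ) 1) {u v : List (Fin N)}
    (hu : u ∈ Pdelta r δ) (hv : v ∈ Pdelta r δ) (h : u <+: v) : u = v := by
  obtain ⟨t, rfl⟩ := h
  rcases List.eq_nil_or_concat t with rfl | ⟨t, a, rfl⟩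
  · exact (List.append_nil u).symm
  · have hvt : δ < rword r (u ++ t) := by simpa [← List.append_assoc] using hv.2
    linarith [hu.1, rword_le_of_prefix hr (List.prefix_append u t)]

theorem eq_of_prefix_of_prefix_of_mem_Pdelta (hr : ∀ a, r a ∈ Set.Icc (0 : ℝ) 1)
    {u v w : List (Fin N)} (hu : u ∈ Pdelta r δ) (hv : v ∈ Pdelta r δ) (huw : u <+: w)
    (hvw : v <+: w) : u = v := by
  rcases List.prefix_or_prefix_of_prefix huw hvw with h | h
  · exact eq_of_prefix_of_mem_Pdelta hr hu hv h
  · exact (eq_of_prefix_of_mem_Pdelta hr hv hu h).symm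

theorem exists_mem_Pdelta_prefix_cons (hr : ∀ a, r a ∈ Set.Icc (0 : ℝ) 1) (a : Fin N)
    {l : List (Fin N)} (hl : l ∈ Pdelta r δ) : ∃ u ∈ Pdelta r δ, u <+: a :: l :=
  exists_mem_Pdelta_prefix (lt_one_of_mem_Pdelta hr hl)
    ((rword_cons_le hr a l).trans hl.1)

end Pdelta

section Amat

variable {p : Fin N → ℝ}

theorem Amat_nonneg (hp : ∀ a, 0 ≤ p a) (i j : List (Fin N)) : 0 ≤ Amat p i j :=
  Finset.sum_nonneg fun a _ => by split_ifs; exacts [hp a, le_rfl]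

theorem Amat_pos_of_prefix_cons (hp : ∀ a, 0 < p a) {i j : List (Fin N)} {a : Fin N}
    (h : j <+: a :: i) : 0 < Amat p i j :=
  Finset.sum_pos' (fun b _ => by split_ifs; exacts [(hp b).le, le_rfl])
    ⟨a, Finset.mem_univ a, by rw [if_pos (cyl_subset_cyl_of_prefix h)]; exact hp a⟩

end Amat

theorem stmt7_general {N : ℕ} (p r : Fin N → ℝ)
    (hp : ∀ i, 0 < p i)
    (hr : ∀ i, r i ∈ Set.Ioo (0 : ℝ) 1)
    (δ : ℝ)
    [Fintype {l : List (Fin N) // l ∈ Pdelta r δ}]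
    (A : Matrix {l : List (Fin N) // l ∈ Pdelta r δ}
                {l : List (Fin N) // l ∈ Pdelta r δ} ℝ)
    (hA : ∀ i j, A i j = Amat p i.1 j.1)
    (L : ℕ) (hL : IsGreatest (List.length '' Pdelta r δ) L) :
    ∀ i j, 0 < (A ^ L) i j := by
  intro i j
  have hr' : ∀ a, r a ∈ Set.Icc (0 : ℝ) 1 := fun a => Set.Ioo_subset_Icc_self (hr a)
  have hnext : ∀ a (x : {l // l ∈ Pdelta r δ}),
      ∃ y : {l // l ∈ Pdelta r δ}, y.1 <+: a :: x.1 := fun a x =>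
    let ⟨u, hu, hux⟩ := exists_mem_Pdelta_prefix_cons hr' a x.2; ⟨⟨u, hu⟩, hux⟩
  choose f hf using hnext
  have hfoldr : ∀ (w : List (Fin N)) x, (w.foldr f x).1 <+: w ++ x.1 := by
    intro w x
    induction w with
    | nil => exact List.prefix_rfl
    | cons a w ih => exact (hf a _).trans (List.cons_prefix_cons.mpr ⟨rfl, ih⟩)
  obtain ⟨a, -⟩ := List.exists_mem_of_ne_nil j.1 (ne_of_mem_of_not_mem j.2 nil_notMem_Pdelta)
  set w := j.1 ++ List.replicate (L - j.1.length) a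
  have hw : w.length = L := by
    have := hL.2 ⟨j.1, j.2, rfl⟩
    simp only [w, List.length_append, List.length_replicate]
    omega
  have hwj : w.foldr f i = j := by
    rw [List.foldr_append]
    exact Subtype.ext (eq_of_prefix_of_prefix_of_mem_Pdelta hr' (Subtype.prop _) j.2 (hfoldr _ _)
      (List.prefix_append _ _))
  have hpos := Matrix.pow_length_apply_foldr_pos
    (fun x y => (hA x y).symm ▸ Amat_nonneg (fun b => (hp b).le) x.1 y.1)
    (fun a x => (hA _ _).symm ▸ Amat_pos_of_prefix_cons hp (hf a x)) w i
  rwa [hw, hwj] at hpos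

/-- A_δ is primitive (hence irreducible): with
L_δ = max{|i| : i ∈ P_δ}, every entry of A_δ^{L_δ} is strictly positive. -/
theorem stmt7 {N : ℕ} (hN : 0 < N) (p r : Fin N → ℝ)
    (hp : ∀ i, 0 < p i) (hpsum : ∑ i, p i = 1)
    (hr : ∀ i, r i ∈ Set.Ioo (0 : ℝ) 1)
    (δ : ℝ) (hδ0 : 0 < δ) (hδ : ∀ i, δ < r i)
    [Fintype {l : List (Fin N) // l ∈ Pdelta r δ}]
    (A : Matrix {l : List (Fin N) // l ∈ Pdelta r δ}
                {l : List (Fin N) // l ∈ Pdelta r δ} ℝ)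
    (hA : ∀ i j, A i j = Amat p i.1 j.1)
    (L : ℕ) (hL : IsGreatest (List.length '' Pdelta r δ) L) :
    ∀ i j, 0 < (A ^ L) i j :=
  stmt7_general p r hp hr δ A hA L hL
end

section
/- (Probability of fast hitting.) Fix 0 < δ < r_min and distinct states i, j ∈ P_δ of the Markov chain (X_t^δ). Suppose that whenever X_0 = i, the hitting time τ_j = min{t ≥ 0 : X_t = j} satisfies τ_j ≥ m (at least m transitions are needed). Let p = max_a p_a, ℓ_δ = min{|k| : k ∈ P_δ}, L_δ = max{|k| : k ∈ P_δ}. Then P_i(τ_j < L_δ) ≤ p^m/(1−p) + p^{ℓ_δ}(L_δ − ℓ_δ). -/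
/-- The word j occurs at time n (using only the appended letters ω 0, ..., ω (n-1),
read most-recent-first): j appears as the block of the last |j| appended letters. -/
def occursAt {N : ℕ} (j : List (Fin N)) (ω : ℕ → Fin N) (n : ℕ) : Prop :=
  j.length ≤ n ∧ ∀ t : Fin j.length, j.get t = ω (n - 1 - (t : ℕ))

/-- The all-new-bits waiting time w_j: the first time j is completed using
entirely new appended letters. -/
noncomputable def wtime {N : ℕ} (j : List (Fin N)) (ω : ℕ → Fin N) : ℕ :=
  sInf {n | occursAt j ω n}


open MeasureTheory Finset

section Words

variable {N : ℕ}

lemma prefix_of_cyl_subset (hN : 2 ≤ N) {l l' : List (Fin N)} (h : cyl l ⊆ cyl l') :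
    l' <+: l := by
  let extend (c : Fin N) : ℕ → Fin N := fun k => if hk : k < l.length then l[k] else c
  have hext (c : Fin N) : extend c ∈ cyl l' := h fun k => by simp [extend]
  have hlen : l'.length ≤ l.length := by
    by_contra! hlt
    have h0 := hext ⟨0, by omega⟩ ⟨l.length, hlt⟩
    have h1 := hext ⟨1, by omega⟩ ⟨l.length, hlt⟩
    simp only [extend, lt_irrefl, dite_false] at h0 h1
    exact absurd (h0.trans h1.symm) (by simp [Fin.ext_iff])
  refine List.prefix_iff_getElem.mpr ⟨hlen, fun k hk => ?_⟩
  simpa [extend, lt_of_lt_of_le hk hlen] using (hext ⟨0, by omega⟩ ⟨k, hk⟩).symm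

lemma Pdelta_subsingleton_of_fin_one {r : Fin 1 → ℝ} (hr : ∀ a, r a ∈ Set.Ioo (0 : ℝ) 1)
    (δ : ℝ) : (Pdelta r δ).Subsingleton := by
  have hrword (l : List (Fin 1)) : rword r l = r 0 ^ l.length := by
    rw [rword, List.map_congr_left (fun a _ => congrArg r (Subsingleton.elim a 0)),
      List.map_const', List.prod_replicate]
  have hlen {l l' : List (Fin 1)} (hl : l ∈ Pdelta r δ) (hl' : l' ∈ Pdelta r δ) :
      l'.length ≤ l.length := by
    have hlt : r 0 ^ l.length < r 0 ^ (l'.length - 1) := by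
      have := hl.1.trans_lt hl'.2
      rwa [hrword, hrword, List.length_dropLast] at this
    have := (pow_lt_pow_iff_right_of_lt_one₀ (hr 0).1 (hr 0).2).mp hlt
    omega
  intro l hl l' hl'
  exact List.ext_getElem (le_antisymm (hlen hl' hl) (hlen hl hl'))
    fun _ _ _ => Subsingleton.elim _ _

def history (ω : ℕ → Fin N) : ℕ → List (Fin N)
  | 0 => []
  | t + 1 => ω t :: history ω t

@[simp]
lemma length_history (ω : ℕ → Fin N) (t : ℕ) : (history ω t).length = t := by
  induction t <;> simp [history, *]

lemma getElem_history (ω : ℕ → Fin N) (t s : ℕ) (hs : s < (history ω t).length) :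
    (history ω t)[s] = ω (t - 1 - s) := by
  induction t generalizing s with
  | zero => simp at hs
  | succ t ih =>
    cases s with
    | zero => simp [history]
    | succ s =>
      simp only [history, List.getElem_cons_succ, ih]
      congr 1
      omega

lemma prefix_history_append (hN : 2 ≤ N) (ω : ℕ → Fin N) (x : ℕ → List (Fin N))
    (hstep : ∀ t, cyl (ω t :: x t) ⊆ cyl (x (t + 1))) (t : ℕ) :
    x t <+: history ω t ++ x 0 := by
  induction t with
  | zero => simp [history]
  | succ t ih =>
    exact (prefix_of_cyl_subset hN (hstep t)).trans (List.cons_prefix_cons.mpr ⟨rfl, ih⟩)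

def compatLetters (w : List (Fin N)) (s : ℕ) : Finset (Fin N) :=
  (w[s]?).elim univ singleton

lemma getElem_mem_compatLetters {w u : List (Fin N)} (h : w <+: u) {s : ℕ}
    (hs : s < u.length) : u[s] ∈ compatLetters w s := by
  unfold compatLetters
  cases hw : w[s]? with
  | none => simp
  | some a =>
    have hsw : s < w.length := (List.getElem?_eq_some_iff.mp hw).1
    have := List.prefix_iff_getElem?.mp h s hsw
    simp_all

lemma prod_sum_compatLetters (p : Fin N → ℝ) (hpsum : ∑ a, p a = 1) (w : List (Fin N))
    (t : ℕ) : ∏ s ∈ range t, ∑ a ∈ compatLetters w s, p a = pword p (w.take t) := by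
  induction t with
  | zero => simp [pword]
  | succ t ih =>
    rw [prod_range_succ, ih, List.take_add_one]
    unfold compatLetters pword
    cases w[t]? <;> simp [hpsum]

lemma pword_le_pow_length {p : Fin N → ℝ} (hp : ∀ a, 0 ≤ p a) {q : ℝ} (hq : ∀ a, p a ≤ q)
    (w : List (Fin N)) : pword p w ≤ q ^ w.length := by
  simpa [pword, List.map_const', List.prod_replicate] using
    List.prod_map_le_prod_map₀ p (fun _ => q) (fun a _ => hp a) (fun a _ => hq a)

end Words

lemma sum_Ico_pow_min_le {q : ℝ} (hq0 : 0 ≤ q) (hq1 : q < 1) {m ℓ J L : ℕ}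
    (hℓJ : ℓ ≤ J) (hJL : J ≤ L) :
    ∑ t ∈ Ico m L, q ^ min t J ≤ q ^ m / (1 - q) + q ^ ℓ * ((L : ℝ) - ℓ) := by
  have hsplit : Ico m L ⊆ Ico m J ∪ Ico J L := by
    intro t; simp only [mem_union, mem_Ico]; omega
  have hbefore : ∑ t ∈ Ico m J, q ^ min t J ≤ q ^ m / (1 - q) := by
    refine le_trans (le_of_eq (sum_congr rfl fun t ht => ?_)) (geom_sum_Ico_le_of_lt_one hq0 hq1)
    rw [min_eq_left (mem_Ico.mp ht).2.le]
  have hafter : ∑ t ∈ Ico J L, q ^ min t J ≤ q ^ ℓ * ((L : ℝ) - ℓ) := by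
    calc ∑ t ∈ Ico J L, q ^ min t J = (L - J : ℕ) * q ^ J := by
          rw [sum_congr rfl fun t ht => by rw [min_eq_right (mem_Ico.mp ht).1], sum_const,
            Nat.card_Ico, nsmul_eq_mul]
      _ ≤ ((L : ℝ) - ℓ) * q ^ ℓ := by
          have hℓJ' : (ℓ : ℝ) ≤ J := by exact_mod_cast hℓJ
          have hJL' : (J : ℝ) ≤ L := by exact_mod_cast hJL
          refine mul_le_mul ?_ (pow_le_pow_of_le_one hq0 hq1.le hℓJ) (by positivity) (by linarith)
          push_cast [hJL]
          linarith
      _ = q ^ ℓ * ((L : ℝ) - ℓ) := mul_comm _ _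
  calc ∑ t ∈ Ico m L, q ^ min t J ≤ ∑ t ∈ Ico m J ∪ Ico J L, q ^ min t J :=
        sum_le_sum_of_subset_of_nonneg hsplit fun _ _ _ => by positivity
    _ = ∑ t ∈ Ico m J, q ^ min t J + ∑ t ∈ Ico J L, q ^ min t J :=
        sum_union (Ico_disjoint_Ico_consecutive m J L)
    _ ≤ _ := add_le_add hbefore hafter

lemma apply_lt_one_of_sum_eq_one {ι : Type*} [Fintype ι] [Nontrivial ι] {p : ι → ℝ}
    (hp : ∀ a, 0 < p a) (hpsum : ∑ a, p a = 1) (a : ι) : p a < 1 := by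
  obtain ⟨b, hba⟩ := exists_ne a
  exact hpsum ▸ single_lt_sum hba (mem_univ a) (mem_univ b) (hp b) fun c _ _ => (hp c).le

section Measure

variable {N : ℕ} {p : Fin N → ℝ} {μ : Measure (ℕ → Fin N)}

def IsBernoulliMeasure (p : Fin N → ℝ) (μ : Measure (ℕ → Fin N)) : Prop :=
  ∀ (n : ℕ) (f : Fin n → Fin N), μ {ω | ∀ k : Fin n, ω k = f k} = ENNReal.ofReal (∏ k, p (f k))

lemma measure_forall_lt_mem_le (hp : ∀ a, 0 ≤ p a) (hμ : IsBernoulliMeasure p μ) (n : ℕ)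
    (T : ℕ → Finset (Fin N)) :
    μ {ω | ∀ k < n, ω k ∈ T k} ≤ ENNReal.ofReal (∏ k ∈ range n, ∑ a ∈ T k, p a) := by
  have hcover : {ω : ℕ → Fin N | ∀ k < n, ω k ∈ T k} ⊆
      ⋃ g ∈ Fintype.piFinset fun k : Fin n => T k, {ω | ∀ k : Fin n, ω k = g k} := by
    intro ω hω
    simp only [Set.mem_iUnion, Fintype.mem_piFinset]
    exact ⟨fun k => ω k, fun k => hω k k.isLt, fun k => rfl⟩
  calc μ _ ≤ ∑ g ∈ Fintype.piFinset fun k : Fin n => T k, μ {ω | ∀ k : Fin n, ω k = g k} :=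
        (measure_mono hcover).trans (measure_biUnion_finset_le _ _)
    _ = ENNReal.ofReal (∑ g ∈ Fintype.piFinset fun k : Fin n => T k, ∏ k, p (g k)) := by
        rw [ENNReal.ofReal_sum_of_nonneg fun g _ => prod_nonneg fun k _ => hp _]
        exact sum_congr rfl fun g _ => hμ n g
    _ = ENNReal.ofReal (∏ k ∈ range n, ∑ a ∈ T k, p a) := by
        rw [← prod_univ_sum, Fin.prod_univ_eq_prod_range (fun k => ∑ a ∈ T k, p a)]

lemma measure_eq_le_pword (hN : 2 ≤ N) (hp : ∀ a, 0 ≤ p a) (hpsum : ∑ a, p a = 1)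
    (hμ : IsBernoulliMeasure p μ) {X : (ℕ → Fin N) → ℕ → List (Fin N)}
    (hXstep : ∀ ω t, cyl (ω t :: X ω t) ⊆ cyl (X ω (t + 1))) (j : List (Fin N)) (t : ℕ) :
    μ {ω | X ω t = j} ≤ ENNReal.ofReal (pword p (j.take t)) := by
  have hsub : {ω | X ω t = j} ⊆ {ω | ∀ k < t, ω k ∈ compatLetters j (t - 1 - k)} := by
    intro ω hXj k hk
    have hpre := prefix_history_append hN ω (X ω) (hXstep ω) t
    rw [show X ω t = j from hXj] at hpre
    have hs : t - 1 - k < (history ω t ++ X ω 0).length := by simp; omega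
    have := getElem_mem_compatLetters hpre hs
    rwa [List.getElem_append_left (by simp; omega), getElem_history,
      show t - 1 - (t - 1 - k) = k by omega] at this
  calc μ _ ≤ μ {ω | ∀ k < t, ω k ∈ compatLetters j (t - 1 - k)} := measure_mono hsub
    _ ≤ ENNReal.ofReal (∏ k ∈ range t, ∑ a ∈ compatLetters j (t - 1 - k), p a) :=
        measure_forall_lt_mem_le hp hμ t _
    _ = ENNReal.ofReal (pword p (j.take t)) := by
        rw [prod_range_reflect (fun s => ∑ a ∈ compatLetters j s, p a) t,
          prod_sum_compatLetters p hpsum]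

lemma measure_exists_eq_le (hN : 2 ≤ N) (hp : ∀ a, 0 ≤ p a) (hpsum : ∑ a, p a = 1)
    (hμ : IsBernoulliMeasure p μ) {X : (ℕ → Fin N) → ℕ → List (Fin N)}
    (hXstep : ∀ ω t, cyl (ω t :: X ω t) ⊆ cyl (X ω (t + 1))) {q : ℝ} (hq0 : 0 ≤ q)
    (hq : ∀ a, p a ≤ q) {j : List (Fin N)} {m : ℕ} (hm : ∀ ω t, X ω t = j → m ≤ t) (L : ℕ) :
    μ {ω | ∃ t < L, X ω t = j} ≤ ENNReal.ofReal (∑ t ∈ Ico m L, q ^ min t j.length) := by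
  have hsub : {ω | ∃ t < L, X ω t = j} ⊆ ⋃ t ∈ Ico m L, {ω | X ω t = j} := by
    rintro ω ⟨t, htL, hXj⟩
    exact Set.mem_biUnion (mem_Ico.mpr ⟨hm ω t hXj, htL⟩) hXj
  calc _ ≤ ∑ t ∈ Ico m L, μ {ω | X ω t = j} :=
        (measure_mono hsub).trans (measure_biUnion_finset_le _ _)
    _ ≤ ∑ t ∈ Ico m L, ENNReal.ofReal (q ^ min t j.length) := by
        refine sum_le_sum fun t _ => (measure_eq_le_pword hN hp hpsum hμ hXstep j t).trans ?_
        exact ENNReal.ofReal_le_ofReal (by simpa using pword_le_pow_length hp hq (j.take t))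
    _ = _ := (ENNReal.ofReal_sum_of_nonneg fun t _ => by positivity).symm

end Measure

open MeasureTheory in
theorem stmt13_general {N : ℕ} (p r : Fin N → ℝ)
    (hp : ∀ i, 0 < p i) (hpsum : ∑ i, p i = 1)
    (hr : ∀ i, r i ∈ Set.Ioo (0 : ℝ) 1)
    (δ : ℝ)
    (μ : Measure (ℕ → Fin N))
    (hμ : ∀ (n : ℕ) (f : Fin n → Fin N),
      μ {ω | ∀ k : Fin n, ω k = f k} = ENNReal.ofReal (∏ k, p (f k)))
    (i j : List (Fin N)) (hi : i ∈ Pdelta r δ) (hj : j ∈ Pdelta r δ) (hij : i ≠ j)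
    (X : (ℕ → Fin N) → ℕ → List (Fin N))
    (hXstep : ∀ ω t, cyl (ω t :: X ω t) ⊆ cyl (X ω (t + 1)))
    (L ℓ : ℕ)
    (hL : IsGreatest (List.length '' Pdelta r δ) L)
    (hℓ : IsLeast (List.length '' Pdelta r δ) ℓ)
    (pmax : ℝ) (hpmax : IsGreatest (Set.range p) pmax)
    (m : ℕ) (hm : ∀ ω t, X ω t = j → m ≤ t) :
    (μ {ω | ∃ t < L, X ω t = j}).toReal ≤
      pmax ^ m / (1 - pmax) + pmax ^ ℓ * ((L : ℝ) - (ℓ : ℝ)) := by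
  obtain hN | hN := Nat.lt_or_ge N 2
  · interval_cases N
    · obtain ⟨a, -⟩ := hpmax.1
      exact a.elim0
    · exact absurd (Pdelta_subsingleton_of_fin_one hr δ hi hj) hij
  obtain ⟨a, rfl⟩ := hpmax.1
  have : Nontrivial (Fin N) := Fin.nontrivial_iff_two_le.mpr hN
  have hpa0 : 0 ≤ p a := (hp a).le
  have hpa1 : p a < 1 := apply_lt_one_of_sum_eq_one hp hpsum a
  calc (μ {ω | ∃ t < L, X ω t = j}).toReal ≤ ∑ t ∈ Ico m L, p a ^ min t j.length :=
        ENNReal.toReal_le_of_le_ofReal (sum_nonneg fun t _ => by positivity)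
          (measure_exists_eq_le hN (fun b => (hp b).le) hpsum hμ hXstep hpa0
            (fun b => hpmax.2 ⟨b, rfl⟩) hm L)
    _ ≤ _ := sum_Ico_pow_min_le hpa0 hpa1 (hℓ.2 ⟨j, hj, rfl⟩) (hL.2 ⟨j, hj, rfl⟩)

open MeasureTheory in
/-- probability of fast hitting: for distinct states i, j ∈ P_δ
of the chain X_t^δ (driven by i.i.d. letters with distribution (p_a)), if at
least m transitions are needed to hit j from i, then
P_i(τ_j < L_δ) ≤ p^m/(1-p) + p^{ℓ_δ}(L_δ - ℓ_δ), where p = max_a p_a. -/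
theorem stmt13 {N : ℕ} (hN : 0 < N) (p r : Fin N → ℝ)
    (hp : ∀ i, 0 < p i) (hpsum : ∑ i, p i = 1)
    (hr : ∀ i, r i ∈ Set.Ioo (0 : ℝ) 1)
    (δ : ℝ) (hδ0 : 0 < δ) (hδ : ∀ a, δ < r a)
    (μ : Measure (ℕ → Fin N)) [IsProbabilityMeasure μ]
    (hμ : ∀ (n : ℕ) (f : Fin n → Fin N),
      μ {ω | ∀ k : Fin n, ω k = f k} = ENNReal.ofReal (∏ k, p (f k)))
    (i j : List (Fin N)) (hi : i ∈ Pdelta r δ) (hj : j ∈ Pdelta r δ) (hij : i ≠ j)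
    (X : (ℕ → Fin N) → ℕ → List (Fin N))
    (hX0 : ∀ ω, X ω 0 = i)
    (hXmem : ∀ ω t, X ω (t + 1) ∈ Pdelta r δ)
    (hXstep : ∀ ω t, cyl (ω t :: X ω t) ⊆ cyl (X ω (t + 1)))
    (L ℓ : ℕ)
    (hL : IsGreatest (List.length '' Pdelta r δ) L)
    (hℓ : IsLeast (List.length '' Pdelta r δ) ℓ)
    (pmax : ℝ) (hpmax : IsGreatest (Set.range p) pmax)
    (m : ℕ) (hm : ∀ ω t, X ω t = j → m ≤ t) :
    (μ {ω | ∃ t < L, X ω t = j}).toReal ≤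
      pmax ^ m / (1 - pmax) + pmax ^ ℓ * ((L : ℝ) - (ℓ : ℝ)) :=
  stmt13_general p r hp hpsum hr δ μ hμ i j hi hj hij X hXstep L ℓ hL hℓ pmax hpmax m hm
end
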